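/- For every positive integer n and every real x with |x| < 2π, the n-th derivative of x/(eˣ − 1), evaluated as x → 0, equals ∑_{k=1}^{n} (-1)^k · k! · B_{n,k}(1/2, 1/3, …, 1/(n-k+2)), i.e., this expression equals the n-th Bernoulli number Bₙ. -/

import Mathlib

open Finset

/-- Bell polynomials of the second kind: `bellB n k x` is
`B_{n,k}(x 1, x 2, …, x (n-k+1))`, summing over sequences of nonnegative
integers `ℓ 1, …` with `∑ i * ℓ i = n` and `∑ ℓ i = k`. -/
noncomputable def bellB (n k : ℕ) (x : ℕ → ℝ) : ℝ :=
  ∑ ℓ : Fin (n + 1) → Fin (n + 1),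
    if (ℓ 0 : ℕ) = 0 ∧ (∑ i : Fin (n + 1), (i : ℕ) * (ℓ i : ℕ)) = n ∧ (∑ i : Fin (n + 1), (ℓ i : ℕ)) = k then
      (n.factorial : ℝ) / (∏ i : Fin (n + 1), ((ℓ i : ℕ).factorial : ℝ)) *
        ∏ i : Fin (n + 1), (x (i : ℕ) / ((i : ℕ).factorial : ℝ)) ^ (ℓ i : ℕ)
    else 0

/-- Stirling numbers of the second kind (real-valued), with
`stirlingS 0 0 = 1` and `stirlingS n 0 = 0` for `n ≥ 1`. -/
noncomputable def stirlingS (n k : ℕ) : ℝ :=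
  (1 / (k.factorial : ℝ)) *
    ∑ l ∈ Finset.range (k + 1), (-1 : ℝ) ^ (k - l) * (k.choose l) * (l : ℝ) ^ n

/-! Write `h = dslope exp 0`, i.e. `h x = (eˣ - 1) / x`. It is analytic, with
`h⁽ʲ⁾ 0 = 1 / (j + 1)`, and the function of the theorem is `1 / h`, so its `n`-th derivative is
continuous at `0`.
Leibniz's rule applied to `(1 / h) * h = 1` gives at `0` the recursion `bernoulli_spec'` of the
Bernoulli numbers, hence `(1 / h)⁽ⁿ⁾ 0 = Bₙ`.

For the Bell sum: by the multinomial theorem `k! B_{n,k}(x)` is `n!` times the `n`-th coefficient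
of `(∑_{i ≥ 1} xᵢ tⁱ / i!) ^ k`. For `xᵢ = 1 / (i + 1)` this series is `g - 1` with
`g = (eᵗ - 1) / t`, so the alternating sum is `n!` times the `n`-th coefficient of
`∑_{k ≤ n} (1 - g) ^ k`, which agrees with `1 / g = ∑ Bₙ tⁿ / n!` up to order `n`. -/

open PowerSeries
open scoped Nat

theorem sum_fun_fin_eq_sum_piAntidiag {ι M : Type*} [Fintype ι] [DecidableEq ι]
    [AddCommMonoid M] {n k : ℕ} (hk : k ≤ n) (G : (ι → ℕ) → M) :
    ∑ ℓ : ι → Fin (n + 1), (if ∑ i, (ℓ i : ℕ) = k then G (fun i => ℓ i) else 0) =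
      ∑ d ∈ univ.piAntidiag k, G d := by
  rw [← sum_filter]
  have hle {d : ι → ℕ} (hd : d ∈ univ.piAntidiag k) (i : ι) : d i ≤ n :=
    ((single_le_sum (fun j _ => Nat.zero_le (d j)) (mem_univ i)).trans
      (mem_piAntidiag.mp hd).1.le).trans hk
  refine sum_nbij' (fun ℓ i => ℓ i) (fun d i => ⟨min (d i) n, by omega⟩) ?_ ?_ ?_ ?_ ?_
  · intro ℓ hℓ
    simpa [mem_piAntidiag] using hℓ
  · intro d hd
    simp [mem_piAntidiag.mp hd, min_eq_left (hle hd _)]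
  · intro ℓ _
    funext i
    exact Fin.ext (min_eq_left (Nat.lt_succ_iff.mp (ℓ i).isLt))
  · intro d hd
    funext i
    exact min_eq_left (hle hd i)
  · intro ℓ _
    rfl

theorem bellB_eq_sum_piAntidiag {n k : ℕ} (hk : k ≤ n) (x : ℕ → ℝ) :
    bellB n k x = ∑ d ∈ (univ : Finset (Fin (n + 1))).piAntidiag k,
      if d 0 = 0 ∧ ∑ i : Fin (n + 1), (i : ℕ) * d i = n then
        (n ! : ℝ) / (∏ i, ((d i)! : ℝ)) * ∏ i : Fin (n + 1), (x i / (i ! : ℝ)) ^ d i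
      else 0 := by
  rw [bellB, ← sum_fun_fin_eq_sum_piAntidiag hk]
  refine sum_congr rfl fun ℓ _ => ?_
  rw [← ite_and]
  exact if_congr (by tauto) rfl rfl

namespace PowerSeries

theorem coe_trunc_succ_eq_sum {R : Type*} [CommRing R] (f : R⟦X⟧) (n : ℕ) :
    (trunc (n + 1) f : R⟦X⟧) = ∑ i : Fin (n + 1), monomial i (coeff i f) := by
  ext m
  rw [Polynomial.coeff_coe, coeff_trunc, map_sum]
  simp only [coeff_monomial]
  rw [Fin.sum_univ_eq_sum_range (fun i => if m = i then coeff i f else 0), sum_ite_eq]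
  simp

theorem coeff_pow_eq_sum_piAntidiag {R : Type*} [CommRing R] (f : R⟦X⟧) (n k : ℕ) :
    coeff n (f ^ k) = ∑ d ∈ (univ : Finset (Fin (n + 1))).piAntidiag k,
      if ∑ i : Fin (n + 1), (i : ℕ) * d i = n then
        (Nat.multinomial univ d : R) * ∏ i : Fin (n + 1), coeff i f ^ d i
      else 0 := by
  have htrunc : coeff n (f ^ k) = coeff n ((trunc (n + 1) f : R⟦X⟧) ^ k) := by
    rw [← coeff_coe_trunc_of_lt n.lt_succ_self, ← trunc_trunc_pow,
      coeff_coe_trunc_of_lt n.lt_succ_self]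
  rw [htrunc, coe_trunc_succ_eq_sum, sum_pow_eq_sum_piAntidiag, map_sum]
  refine sum_congr rfl fun d _ => ?_
  simp only [monomial_pow, prod_monomial]
  rw [← map_natCast (C (R := R)), coeff_C_mul, coeff_monomial]
  simp_rw [mul_comm (d _), eq_comm (a := n)]
  rw [mul_ite, mul_zero]

theorem coeff_sum_range_one_sub_pow {R : Type*} [CommRing R] {b g : R⟦X⟧}
    (hbg : b * g = 1) (hg : constantCoeff g = 1) (n : ℕ) :
    coeff n (∑ k ∈ range (n + 1), (1 - g) ^ k) = coeff n b := by
  have hX : X ^ (n + 1) ∣ (1 - g) ^ (n + 1) :=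
    pow_dvd_pow_of_dvd (X_dvd_iff.mpr (by simp [hg])) _
  have hsum : ∑ k ∈ range (n + 1), (1 - g) ^ k = b - b * (1 - g) ^ (n + 1) := by
    calc ∑ k ∈ range (n + 1), (1 - g) ^ k
        = b * ((1 - (1 - g)) * ∑ k ∈ range (n + 1), (1 - g) ^ k) := by
          rw [sub_sub_cancel, ← mul_assoc, hbg, one_mul]
      _ = b - b * (1 - g) ^ (n + 1) := by rw [mul_neg_geom_sum, mul_sub, mul_one]
  rw [hsum, map_sub, X_pow_dvd_iff.mp (hX.mul_left b) n n.lt_succ_self, sub_zero]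

variable (A : Type*) [CommRing A] [Algebra ℚ A]

noncomputable def expSubOneDivX : A⟦X⟧ :=
  mk fun i => algebraMap ℚ A (1 / (i + 1)!)

theorem X_mul_expSubOneDivX : X * expSubOneDivX A = exp A - 1 := by
  ext (_ | i) <;> simp [expSubOneDivX, coeff_succ_X_mul, coeff_one]

theorem bernoulliPowerSeries_mul_expSubOneDivX :
    bernoulliPowerSeries A * expSubOneDivX A = 1 := by
  apply X_mul_cancel
  rw [mul_left_comm, X_mul_expSubOneDivX, bernoulliPowerSeries_mul_exp_sub_one, mul_one]

theorem constantCoeff_expSubOneDivX : constantCoeff (expSubOneDivX A) = 1 := by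
  simp [expSubOneDivX, ← coeff_zero_eq_constantCoeff_apply]

end PowerSeries

theorem factorial_mul_bellB_eq_coeff_pow {n k : ℕ} (hk : k ≤ n) (x : ℕ → ℝ) {f : ℝ⟦X⟧}
    (hf₀ : constantCoeff f = 0) (hf : ∀ i, i ≠ 0 → coeff i f = x i / i !) :
    (k ! : ℝ) * bellB n k x = n ! * coeff n (f ^ k) := by
  rw [bellB_eq_sum_piAntidiag hk, coeff_pow_eq_sum_piAntidiag, mul_sum, mul_sum]
  refine sum_congr rfl fun d hd => ?_
  by_cases hS : ∑ i : Fin (n + 1), (i : ℕ) * d i = n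
  · by_cases h₀ : d 0 = 0
    · have hprod : ∏ i : Fin (n + 1), coeff i f ^ d i = ∏ i : Fin (n + 1), (x i / i !) ^ d i := by
        refine prod_congr rfl fun i _ => ?_
        rcases eq_or_ne (i : ℕ) 0 with hi | hi
        · simp [show i = 0 from Fin.ext hi, h₀]
        · rw [hf i hi]
      have hmult : (∏ i, ((d i)! : ℝ)) * Nat.multinomial univ d = k ! := by
        rw [← (mem_piAntidiag.mp hd).1]
        exact_mod_cast Nat.multinomial_spec univ d
      rw [if_pos ⟨h₀, hS⟩, if_pos hS, hprod, ← hmult]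
      field_simp
    · have hprod : ∏ i : Fin (n + 1), coeff i f ^ d i = 0 :=
        prod_eq_zero (mem_univ 0) (by simp [hf₀, h₀])
      simp [h₀, hS, hprod]
  · simp [hS]

theorem sum_neg_one_pow_mul_factorial_mul_bellB {n : ℕ} (hn : 1 ≤ n) :
    ∑ k ∈ Icc 1 n, (-1 : ℝ) ^ k * (k ! : ℝ) * bellB n k (fun i => 1 / ((i : ℝ) + 1)) =
      bernoulli n := by
  set g := expSubOneDivX ℝ
  have hf (i : ℕ) (hi : i ≠ 0) : coeff i (g - 1) = 1 / ((i : ℝ) + 1) / i ! := by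
    simp [g, expSubOneDivX, coeff_one, hi, Nat.factorial_succ, div_eq_mul_inv, mul_comm]
  have hterm (k : ℕ) (hk : k ∈ Icc 1 n) :
      (-1 : ℝ) ^ k * k ! * bellB n k (fun i => 1 / ((i : ℝ) + 1)) =
        n ! * coeff n ((1 - g) ^ k) := by
    have hpow : (1 - g) ^ k = C ((-1 : ℝ) ^ k) * (g - 1) ^ k := by
      rw [map_pow, map_neg, map_one, ← neg_pow, neg_sub]
    rw [mul_assoc, factorial_mul_bellB_eq_coeff_pow (mem_Icc.mp hk).2 _
      (by simp [g, constantCoeff_expSubOneDivX]) hf, hpow, coeff_C_mul]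
    ring
  have hk₀ : coeff n ((1 - g) ^ 0) = 0 := by
    rw [pow_zero, coeff_one, if_neg (by omega)]
  calc _ = (n ! : ℝ) * coeff n (∑ k ∈ range (n + 1), (1 - g) ^ k) := by
        rw [sum_congr rfl hterm, ← mul_sum, map_sum, Nat.range_succ_eq_Icc_zero,
          Icc_eq_cons_Ioc (Nat.zero_le n), sum_cons, ← Icc_add_one_left_eq_Ioc, zero_add, hk₀,
          zero_add]
    _ = (n ! : ℝ) * coeff n (bernoulliPowerSeries ℝ) := by
        rw [coeff_sum_range_one_sub_pow (bernoulliPowerSeries_mul_expSubOneDivX ℝ)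
          (constantCoeff_expSubOneDivX ℝ)]
    _ = bernoulli n := by
        rw [bernoulliPowerSeries, coeff_mk, map_div₀, eq_ratCast, map_natCast]
        field_simp

open NormedSpace in
theorem hasFPowerSeriesAt_dslope_exp :
    HasFPowerSeriesAt (dslope Real.exp 0) (expSeries ℝ ℝ).fslope 0 := by
  rw [Real.exp_eq_exp_ℝ]
  exact exp_hasFPowerSeriesAt_zero.has_fpower_series_dslope_fslope

theorem analyticAt_dslope_exp (x : ℝ) : AnalyticAt ℝ (dslope Real.exp 0) x := by
  rcases eq_or_ne x 0 with rfl | hx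
  · exact hasFPowerSeriesAt_dslope_exp.analyticAt
  · refine AnalyticAt.congr ?_ (dslope_eventuallyEq_slope_of_ne _ hx).symm
    simp only [slope_fun_def_field]
    fun_prop (disch := simpa)

theorem contDiff_dslope_exp : ContDiff ℝ ⊤ (dslope Real.exp 0) :=
  AnalyticOnNhd.contDiff fun x _ => analyticAt_dslope_exp x

theorem dslope_exp_ne_zero (x : ℝ) : dslope Real.exp 0 x ≠ 0 := by
  rcases eq_or_ne x 0 with rfl | hx
  · simp
  · rw [dslope_of_ne _ hx, slope_def_field]
    exact div_ne_zero (by simpa [sub_eq_zero] using hx) (by simpa using hx)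

theorem contDiff_inv_dslope_exp : ContDiff ℝ ⊤ fun x => (dslope Real.exp 0 x)⁻¹ :=
  contDiff_dslope_exp.inv dslope_exp_ne_zero

open NormedSpace in
theorem iteratedDeriv_dslope_exp_zero (j : ℕ) :
    iteratedDeriv j (dslope Real.exp 0) 0 = ((j : ℝ) + 1)⁻¹ := by
  obtain ⟨r, hr⟩ := hasFPowerSeriesAt_dslope_exp
  rw [iteratedDeriv_eq_iteratedFDeriv, ← hr.factorial_smul 1 j,
    FormalMultilinearSeries.apply_eq_pow_smul_coeff, FormalMultilinearSeries.coeff_fslope,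
    FormalMultilinearSeries.coeff, show (1 : Fin (j + 1) → ℝ) = fun _ => 1 from rfl,
    expSeries_apply_eq]
  simp only [one_pow, Nat.factorial_succ, Nat.cast_mul, Nat.cast_add, Nat.cast_one, mul_inv_rev,
    smul_eq_mul, mul_one, one_mul, nsmul_eq_mul]
  field_simp

theorem eq_bernoulli_of_sum_antidiagonal {K : Type*} [Field K] [CharZero K] (a : ℕ → K)
    (ha : ∀ n, ∑ p ∈ antidiagonal n, ((p.1 + p.2).choose p.2 : K) / (p.2 + 1) * a p.1 =
      if n = 0 then 1 else 0) (n : ℕ) :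
    a n = bernoulli n := by
  have hB (n : ℕ) : ∑ p ∈ antidiagonal n,
      ((p.1 + p.2).choose p.2 : K) / (p.2 + 1) * (bernoulli p.1 : K) = if n = 0 then 1 else 0 := by
    have := congrArg (Rat.cast : ℚ → K) (bernoulli_spec' n)
    rw [Rat.cast_sum, apply_ite Rat.cast, Rat.cast_one, Rat.cast_zero] at this
    simpa using this
  induction n using Nat.strong_induction_on with
  | _ n ih =>
    have h1 := ha n
    have h2 := hB n
    rcases n with _ | m
    · simpa using h1
    · rw [Nat.sum_antidiagonal_succ'] at h1 h2
      have hlow :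
          ∑ p ∈ antidiagonal m, ((p.1 + (p.2 + 1)).choose (p.2 + 1) : K) / (p.2 + 1 + 1) * a p.1 =
            ∑ p ∈ antidiagonal m,
              ((p.1 + (p.2 + 1)).choose (p.2 + 1) : K) / (p.2 + 1 + 1) * bernoulli p.1 :=
        sum_congr rfl fun p hp => by rw [ih p.1 (by have := mem_antidiagonal.mp hp; omega)]
      push_cast at h1 h2 hlow
      simp only [Nat.choose_zero_right, Nat.cast_one, zero_add, div_one, one_mul] at h1 h2
      linear_combination h1 - h2 - hlow

theorem iteratedDeriv_inv_dslope_exp_zero (n : ℕ) :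
    iteratedDeriv n (fun x => (dslope Real.exp 0 x)⁻¹) 0 = bernoulli n := by
  refine eq_bernoulli_of_sum_antidiagonal
    (fun k => iteratedDeriv k (fun x => (dslope Real.exp 0 x)⁻¹) 0) (fun m => ?_) n
  have hleib := iteratedDeriv_fun_mul (n := m) (x := 0)
    (contDiff_inv_dslope_exp.contDiffAt.of_le le_top) (contDiff_dslope_exp.contDiffAt.of_le le_top)
  simp only [inv_mul_cancel₀ (dslope_exp_ne_zero _), iteratedDeriv_dslope_exp_zero,
    iteratedDeriv_const] at hleib
  rw [Nat.sum_antidiagonal_eq_sum_range_succ_mk, hleib]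
  refine sum_congr rfl fun k hk => ?_
  have hkm : k ≤ m := Nat.lt_succ_iff.mp (mem_range.mp hk)
  simp only [Nat.add_sub_cancel' hkm, Nat.choose_symm hkm]
  ring

theorem inv_dslope_exp (x : ℝ) :
    (dslope Real.exp 0 x)⁻¹ = if x = 0 then 1 else x / (Real.exp x - 1) := by
  rcases eq_or_ne x 0 with rfl | hx
  · simp
  · rw [if_neg hx, dslope_of_ne _ hx, slope_def_field, inv_div, sub_zero, Real.exp_zero]

theorem stmt_11 (n : ℕ) (hn : 1 ≤ n) :
    Filter.Tendsto
        (iteratedDeriv n (fun x : ℝ => if x = 0 then 1 else x / (Real.exp x - 1)))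
        (nhdsWithin 0 {(0 : ℝ)}ᶜ)
        (nhds (∑ k ∈ Finset.Icc 1 n,
          (-1 : ℝ) ^ k * (k.factorial : ℝ) * bellB n k (fun i => 1 / ((i : ℝ) + 1)))) ∧
      (∑ k ∈ Finset.Icc 1 n,
          (-1 : ℝ) ^ k * (k.factorial : ℝ) * bellB n k (fun i => 1 / ((i : ℝ) + 1))) =
        (bernoulli n : ℝ) := by
  have hbell := sum_neg_one_pow_mul_factorial_mul_bellB hn
  refine ⟨?_, hbell⟩
  simp_rw [hbell, ← inv_dslope_exp, ← iteratedDeriv_inv_dslope_exp_zero n]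
  exact ((contDiff_inv_dslope_exp.continuous_iteratedDeriv n le_top).tendsto 0).mono_left
    nhdsWithin_le_nhds
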